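/- If φ is a non-constant inner function on 𝔻, then the image φ(𝔻) is dense in 𝔻. -/

import Mathlib

open Complex MeasureTheory Filter Set Metric

noncomputable section

/-- The open unit disk in `ℂ`. -/
def unitDisk : Set ℂ := Metric.ball (0 : ℂ) 1

/-- `h` is an inner function on the unit disk: it is holomorphic and bounded on `𝔻`,
and for a.e. `t` the radial limit `lim_{r→1⁻} h(r e^{it})` exists and has modulus `1`. -/
def IsInner (h : ℂ → ℂ) : Prop :=
  DifferentiableOn ℂ h unitDisk ∧
  (∃ C : ℝ, ∀ z ∈ unitDisk, ‖h z‖ ≤ C) ∧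
  ∀ᵐ t : ℝ ∂volume, ∃ L : ℂ, ‖L‖ = 1 ∧
    Filter.Tendsto (fun r : ℝ => h ((r : ℂ) * Complex.exp (t * Complex.I)))
      (nhdsWithin 1 (Set.Iio 1)) (nhds L)

/-- A single Blaschke factor: `z` if `a = 0`, and `(|a|/a)·(a − z)/(1 − conj a · z)` otherwise. -/
def blaschkeFactor (a : ℂ) (z : ℂ) : ℂ :=
  if a = 0 then z
  else (((‖a‖ : ℝ) : ℂ) / a) * ((a - z) / (1 - (starRingEnd ℂ) a * z))

/-- `B` coincides on the unit disk with a finite Blaschke product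
`c · ∏ (|aₙ|/aₙ)(aₙ − z)/(1 − conj aₙ · z)` with `|c| = 1` and all `aₙ ∈ 𝔻`. -/
def IsFiniteBlaschke (B : ℂ → ℂ) : Prop :=
  ∃ (c : ℂ) (N : ℕ) (a : Fin N → ℂ),
    ‖c‖ = 1 ∧ (∀ n, a n ∈ unitDisk) ∧
    ∀ z ∈ unitDisk, B z = c * ∏ n, blaschkeFactor (a n) z

/-- `g` is an outer function on the unit disk. -/
def IsOuter (g : ℂ → ℂ) : Prop :=
  DifferentiableOn ℂ g unitDisk ∧
  ∃ G : ℝ → ℝ, (∀ t, 0 ≤ G t) ∧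
    IntervalIntegrable (fun t => Real.log (G t)) volume 0 (2 * Real.pi) ∧
    ∀ z ∈ unitDisk,
      g z = Complex.exp ((1 / (2 * Real.pi) : ℂ) *
        ∫ t in (0:ℝ)..(2 * Real.pi),
          ((Complex.exp (t * Complex.I) + z) / (Complex.exp (t * Complex.I) - z)) *
            (Real.log (G t) : ℂ))

/-- The Smirnov class `N⁺`: the zero function together with all products of an
inner function and an outer function. -/
def MemSmirnov (f : ℂ → ℂ) : Prop :=
  (∀ z ∈ unitDisk, f z = 0) ∨
  ∃ h g : ℂ → ℂ, IsInner h ∧ IsOuter g ∧ ∀ z ∈ unitDisk, f z = h z * g z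

/-!
Fatou's argument: for `‖z‖ < 1` and `r < 1`, the Poisson formula writes `f (r z)` as the
Poisson average of `ζ ↦ f (r ζ)` over the unit circle; letting `r → 1⁻`, dominated convergence
shows that a bounded holomorphic function whose radial limits have modulus `≤ 1` almost
everywhere is bounded by `1`. If an inner function `φ` omitted a disk `ball w ε ⊆ 𝔻`, this
bound would apply both to `φ` and to `(1 - w̄ φ) / (φ - w) = canonicalFactor 1 w ∘ φ`, which
again has unimodular radial limits. The second bound forces `‖φ‖ ≥ 1`, so `‖φ‖ = 1` on `𝔻`
and `φ` is constant by the maximum modulus principle.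
-/

open scoped Topology ComplexConjugate
open Real (circleAverage)

theorem poissonKernel_nonneg {c w ζ : ℂ} (h : ‖w - c‖ ≤ ‖ζ - c‖) : 0 ≤ poissonKernel c w ζ :=
  div_nonneg (sub_nonneg.2 (pow_le_pow_left₀ (norm_nonneg _) h 2)) (sq_nonneg _)

theorem poissonKernel_nonneg_of_mem_sphere {c w ζ : ℂ} {R : ℝ} (hw : w ∈ ball c R)
    (hζ : ζ ∈ sphere c R) : 0 ≤ poissonKernel c w ζ :=
  poissonKernel_nonneg (by rw [mem_sphere_iff_norm.1 hζ]; exact (mem_ball_iff_norm.1 hw).le)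

theorem continuousOn_poissonKernel (c w : ℂ) : ContinuousOn (poissonKernel c w) {w}ᶜ := by
  intro ζ hζ
  have : ζ - c - (w - c) ≠ 0 := by simpa [sub_eq_zero] using hζ
  unfold poissonKernel
  fun_prop (disch := positivity)

theorem continuousOn_poissonKernel_sphere {c w : ℂ} {R : ℝ} (hw : w ∈ ball c R) :
    ContinuousOn (poissonKernel c w) (sphere c R) :=
  (continuousOn_poissonKernel c w).mono fun _ hζ hζw =>
    (mem_ball_iff_norm.1 hw).ne (mem_sphere_iff_norm.1 (hζw ▸ hζ))

theorem circleAverage_poissonKernel {c w : ℂ} {R : ℝ} (hw : w ∈ ball c R) :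
    circleAverage (poissonKernel c w) c R = 1 := by
  convert (InnerProductSpace.harmonicContOnCl_const (c := (1 : ℝ))).circleAverage_poissonKernel_smul
    hw using 2
  ext; simp

theorem norm_circleAverage_le_of_norm_le {E : Type*} [NormedAddCommGroup E] [NormedSpace ℝ E]
    {f : ℂ → E} {g : ℂ → ℝ} {c : ℂ} {R : ℝ} (hg : CircleIntegrable g c R)
    (h : ∀ ζ ∈ sphere c |R|, ‖f ζ‖ ≤ g ζ) :
    ‖circleAverage f c R‖ ≤ circleAverage g c R := by
  rw [Real.circleAverage_def, Real.circleAverage_def, norm_smul, smul_eq_mul,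
    Real.norm_of_nonneg (by positivity)]
  gcongr
  exact intervalIntegral.norm_integral_le_of_norm_le Real.two_pi_pos.le
    (Eventually.of_forall fun θ _ => h _ (circleMap_mem_sphere' c R θ)) hg

theorem eventually_abs_lt_one : ∀ᶠ r : ℝ in 𝓝[<] 1, |r| < 1 := by
  filter_upwards [Ioo_mem_nhdsLT (show (-1 : ℝ) < 1 by norm_num)] with r hr
  exact abs_lt.2 hr

section RadialLimits

variable {f : ℂ → ℂ} {r : ℝ} {z : ℂ}

theorem diffContOnCl_unitDisk_comp_mul (hf : DifferentiableOn ℂ f unitDisk) (hr : |r| < 1) :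
    DiffContOnCl ℂ (fun ζ => f (r * ζ)) unitDisk := by
  refine DifferentiableOn.diffContOnCl ?_
  rw [unitDisk, closure_ball _ one_ne_zero]
  refine hf.comp (differentiableOn_const _ |>.mul differentiableOn_id) fun ζ hζ => ?_
  rw [mem_closedBall_zero_iff] at hζ
  simp only [unitDisk, mem_ball_zero_iff, norm_mul, Complex.norm_real, Real.norm_eq_abs]
  nlinarith [abs_nonneg r]

theorem circleIntegrable_poissonKernel_mul_max_norm (hf : DifferentiableOn ℂ f unitDisk)
    (hr : |r| < 1) (hz : z ∈ unitDisk) :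
    CircleIntegrable (fun ζ : ℂ => poissonKernel 0 z ζ * max ‖f (r * ζ)‖ 1) 0 1 := by
  have hfr : ContinuousOn (fun ζ : ℂ => f (r * ζ)) (sphere 0 1) :=
    (diffContOnCl_unitDisk_comp_mul hf hr).continuousOn.mono
      (by simp [unitDisk, closure_ball, sphere_subset_closedBall])
  exact ((continuousOn_poissonKernel_sphere hz).mul
    (hfr.norm.sup continuousOn_const)).circleIntegrable zero_le_one

theorem norm_le_circleAverage_poissonKernel_mul_max_norm (hf : DifferentiableOn ℂ f unitDisk)
    (hr : |r| < 1) (hz : z ∈ unitDisk) :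
    ‖f (r * z)‖ ≤ circleAverage (fun ζ : ℂ => poissonKernel 0 z ζ * max ‖f (r * ζ)‖ 1) 0 1 := by
  rw [← (diffContOnCl_unitDisk_comp_mul hf hr).circleAverage_poissonKernel_smul hz]
  refine norm_circleAverage_le_of_norm_le (circleIntegrable_poissonKernel_mul_max_norm hf hr hz)
    fun ζ hζ => ?_
  have hP := poissonKernel_nonneg_of_mem_sphere hz (by simpa using hζ)
  rw [Pi.smul_apply', norm_smul, Real.norm_of_nonneg hP]
  exact mul_le_mul_of_nonneg_left (le_max_left _ _) hP

/- Truncating `‖f (r ζ)‖` below at `1` makes the almost everywhere limit the kernel itself, so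
no boundary function has to be chosen. -/
theorem tendsto_circleAverage_poissonKernel_mul_max_norm (hf : DifferentiableOn ℂ f unitDisk)
    {C : ℝ} (hC : ∀ z ∈ unitDisk, ‖f z‖ ≤ C)
    (hlim : ∀ᵐ t : ℝ, ∃ L : ℂ, ‖L‖ ≤ 1 ∧
      Tendsto (fun r : ℝ => f (r * exp (t * I))) (𝓝[<] 1) (𝓝 L))
    (hz : z ∈ unitDisk) :
    Tendsto (fun r : ℝ => circleAverage (fun ζ : ℂ => poissonKernel 0 z ζ * max ‖f (r * ζ)‖ 1) 0 1)
      (𝓝[<] 1) (𝓝 1) := by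
  have hr := eventually_abs_lt_one
  have hP : ∀ θ, 0 ≤ poissonKernel 0 z (circleMap 0 1 θ) := fun θ =>
    poissonKernel_nonneg_of_mem_sphere hz (circleMap_mem_sphere 0 zero_le_one θ)
  rw [show 𝓝 (1 : ℝ) = 𝓝 (circleAverage (poissonKernel 0 z) 0 1) by
    rw [circleAverage_poissonKernel hz]]
  simp only [Real.circleAverage_def]
  refine Tendsto.const_smul ?_ _
  refine intervalIntegral.tendsto_integral_filter_of_dominated_convergence
    (fun θ => poissonKernel 0 z (circleMap 0 1 θ) * max C 1) ?_ ?_ ?_ ?_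
  · filter_upwards [hr] with r hr
    exact (intervalIntegrable_iff.1
      (circleIntegrable_poissonKernel_mul_max_norm hf hr hz)).aestronglyMeasurable
  · filter_upwards [hr] with r hr
    refine Eventually.of_forall fun θ _ => ?_
    have hfC : ‖f (r * circleMap 0 1 θ)‖ ≤ C := hC _ (by simpa [unitDisk] using hr)
    rw [Real.norm_of_nonneg (mul_nonneg (hP θ) (le_max_of_le_right zero_le_one))]
    gcongr
    exact hP θ
  · exact ((continuousOn_poissonKernel_sphere hz).mul continuousOn_const).circleIntegrable
      zero_le_one
  · filter_upwards [hlim] with θ ⟨L, hL, hθ⟩ _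
    have hcircle : circleMap 0 1 θ = exp (θ * I) := by simp [circleMap]
    have := (tendsto_const_nhds (x := poissonKernel 0 z (exp (θ * I)))).mul
      (hθ.norm.max (tendsto_const_nhds (x := (1 : ℝ))))
    rwa [max_eq_right hL, mul_one, ← hcircle] at this

theorem norm_le_one_of_ae_tendsto_radial (hf : DifferentiableOn ℂ f unitDisk)
    {C : ℝ} (hC : ∀ z ∈ unitDisk, ‖f z‖ ≤ C)
    (hlim : ∀ᵐ t : ℝ, ∃ L : ℂ, ‖L‖ ≤ 1 ∧
      Tendsto (fun r : ℝ => f (r * exp (t * I))) (𝓝[<] 1) (𝓝 L))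
    (hz : z ∈ unitDisk) : ‖f z‖ ≤ 1 := by
  have hfz : Tendsto (fun r : ℝ => ‖f (r * z)‖) (𝓝[<] 1) (𝓝 ‖f z‖) := by
    have hmul : Continuous fun r : ℝ => (r : ℂ) * z := by fun_prop
    exact ((hf.continuousOn.continuousAt (isOpen_ball.mem_nhds hz)).tendsto.comp
      ((hmul.tendsto' 1 z (by simp)).mono_left nhdsWithin_le_nhds)).norm
  exact le_of_tendsto_of_tendsto hfz
    (tendsto_circleAverage_poissonKernel_mul_max_norm hf hC hlim hz)
    (eventually_abs_lt_one.mono fun _ hr =>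
      norm_le_circleAverage_poissonKernel_mul_max_norm hf hr hz)

end RadialLimits

theorem IsInner.norm_le_one {φ : ℂ → ℂ} (hφ : IsInner φ) {z : ℂ} (hz : z ∈ unitDisk) :
    ‖φ z‖ ≤ 1 :=
  let ⟨hd, ⟨_, hC⟩, hlim⟩ := hφ
  norm_le_one_of_ae_tendsto_radial hd hC (hlim.mono fun _ ⟨L, hL, hL'⟩ => ⟨L, hL.le, hL'⟩) hz

theorem norm_one_sub_conj_mul_sq_sub_norm_sub_sq (w u : ℂ) :
    ‖1 - conj w * u‖ ^ 2 - ‖u - w‖ ^ 2 = (1 - ‖w‖ ^ 2) * (1 - ‖u‖ ^ 2) := by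
  simp only [← normSq_eq_norm_sq, normSq_apply, sub_re, sub_im, mul_re, mul_im, conj_re, conj_im,
    one_re, one_im]
  ring

theorem one_le_norm_of_norm_canonicalFactor_le_one {w u : ℂ} (hw : ‖w‖ < 1) (hu : u ≠ w)
    (h : ‖canonicalFactor 1 w u‖ ≤ 1) : 1 ≤ ‖u‖ := by
  have hu' : 0 < ‖u - w‖ := norm_pos_iff.2 (sub_ne_zero.2 hu)
  rw [canonicalFactor_apply, norm_div, div_le_one (by simpa using hu')] at h
  simp only [Complex.ofReal_one, one_pow, one_mul] at h
  have hprod : (1 - ‖w‖ ^ 2) * (1 - ‖u‖ ^ 2) ≤ 0 := by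
    rw [← norm_one_sub_conj_mul_sq_sub_norm_sub_sq]
    linarith [pow_le_pow_left₀ (norm_nonneg _) h 2]
  have hw2 : 0 < 1 - ‖w‖ ^ 2 := by nlinarith [norm_nonneg w]
  nlinarith [norm_nonneg u, nonpos_of_mul_nonpos_right hprod hw2]

theorem norm_canonicalFactor_le {w u : ℂ} (hw : ‖w‖ ≤ 1) (hu : ‖u‖ ≤ 1) :
    ‖canonicalFactor 1 w u‖ ≤ 2 / ‖u - w‖ := by
  rw [canonicalFactor_apply, norm_div]
  simp only [Complex.ofReal_one, one_pow, one_mul]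
  gcongr
  calc ‖1 - conj w * u‖ ≤ 1 + ‖w‖ * ‖u‖ := by simpa using norm_sub_le 1 (conj w * u)
    _ ≤ 2 := by nlinarith [norm_nonneg w, norm_nonneg u]

theorem IsInner.norm_eq_one_of_le_norm_sub {φ : ℂ → ℂ} (hφ : IsInner φ) {w : ℂ}
    (hw : w ∈ unitDisk) {ε : ℝ} (hε : 0 < ε) (hsep : ∀ z ∈ unitDisk, ε ≤ ‖φ z - w‖)
    {z : ℂ} (hz : z ∈ unitDisk) : ‖φ z‖ = 1 := by
  have hw1 : ‖w‖ < 1 := by simpa [unitDisk] using hw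
  have hne : ∀ z ∈ unitDisk, φ z ≠ w := fun z hz h => by
    simpa [h] using hε.trans_le (hsep z hz)
  have hF_diff : DifferentiableOn ℂ (canonicalFactor 1 w ∘ φ) unitDisk :=
    (analyticOnNhd_canonicalFactor 1 w).differentiableOn.comp hφ.1 hne
  have hF_bdd : ∀ z ∈ unitDisk, ‖(canonicalFactor 1 w ∘ φ) z‖ ≤ 2 / ε := fun z hz =>
    (norm_canonicalFactor_le hw1.le (hφ.norm_le_one hz)).trans
      (div_le_div_of_nonneg_left zero_le_two hε (hsep z hz))
  have hF_lim : ∀ᵐ t : ℝ, ∃ L : ℂ, ‖L‖ ≤ 1 ∧ Tendsto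
      (fun r : ℝ => (canonicalFactor 1 w ∘ φ) (r * exp (t * I))) (𝓝[<] 1) (𝓝 L) := by
    filter_upwards [hφ.2.2] with t ⟨L, hL, hlim⟩
    have hLw : L ≠ w := by rintro rfl; linarith
    exact ⟨_, (norm_canonicalFactor_eval_circle_eq_one hw (by simpa using hL)).le,
      (analyticOnNhd_canonicalFactor 1 w L hLw).continuousAt.tendsto.comp hlim⟩
  have hF_le : ‖(canonicalFactor 1 w ∘ φ) z‖ ≤ 1 :=
    norm_le_one_of_ae_tendsto_radial hF_diff hF_bdd hF_lim hz
  exact le_antisymm (hφ.norm_le_one hz)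
    (one_le_norm_of_norm_canonicalFactor_le_one hw1 (hne z hz) hF_le)

/-- If `φ` is a non-constant inner function on `𝔻`, then `φ(𝔻)` is dense in `𝔻`. -/
theorem image_dense_of_inner_nonconstant
    (φ : ℂ → ℂ) (hφ : IsInner φ)
    (hφnc : ¬ ∃ c : ℂ, ∀ z ∈ unitDisk, φ z = c) :
    unitDisk ⊆ closure (φ '' unitDisk) := by
  intro w hw
  by_contra hw_cl
  obtain ⟨ε, hε, hsep⟩ : ∃ ε > 0, ∀ z ∈ unitDisk, ε ≤ ‖φ z - w‖ := by
    simpa [Metric.mem_closure_iff, dist_eq_norm_sub'] using hw_cl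
  have hnorm := fun z (hz : z ∈ unitDisk) => hφ.norm_eq_one_of_le_norm_sub hw hε hsep hz
  have h0 : (0 : ℂ) ∈ unitDisk := by simp [unitDisk]
  have hmax : IsMaxOn (norm ∘ φ) unitDisk 0 := fun z hz => by
    simp [hnorm z hz, hnorm 0 h0]
  exact hφnc ⟨φ 0, fun z hz => Complex.eq_const_of_exists_max hφ.1 h0 hmax hz⟩
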